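/- Let Γ be a Polish group, G ≤ Γ a dense subgroup, and X = (X_γ)_{γ∈Γ} a stochastically continuous stationary Γ-process. Then X is Γ-ergodic if and only if the restricted stationary G-process X|_G = (X_g)_{g∈G} is G-ergodic. -/

import Mathlib

/-!
Write `ℙ_X` for the law of `X` on `ℝ^Γ`. For a measurable `S ⊆ ℝ^Γ`, the function
`δ ↦ ℙ_X(R_δ⁻¹ S ∆ S)` is subadditive, because the shifts preserve `ℙ_X`, and it tends to `0` as
`δ → 1`: the sets with this property form an algebra that is closed under approximation in
measure, so it suffices to check the one-coordinate events `{x_γ ∈ B}`, where it holds because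
`X_{δ⁻¹γ} → X_γ` in probability and all `X_{δ⁻¹γ}` have the law of `X_γ`. A function of this kind
that vanishes on the dense subgroup `G` vanishes everywhere, so a `G`-invariant set is
`Γ`-invariant.

Conversely, each `X_γ` is an a.s. limit of variables `X_{g_n}` with `g_n ∈ G`, hence a measurable
function of `X|_G`. Therefore every measurable subset of `ℝ^Γ` agrees `ℙ_X`-a.s. with the
preimage of a measurable subset `F ⊆ ℝ^G` under restriction, and if the former is
`Γ`-invariant then `F` is `G`-invariant.
-/

open MeasureTheory ProbabilityTheory Filter Topology symmDiff

noncomputable section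

namespace Paper

variable {G : Type*} {Ω : Type*}

/-- The distribution of a `G`-process: the pushforward of `P` on `ℝ^G`. -/
def procLaw [MeasurableSpace Ω] (P : Measure Ω) (X : G → Ω → ℝ) : Measure (G → ℝ) :=
  Measure.map (fun ω g => X g ω) P

/-- The left translation `R_g` of `ℝ^G`, `R_g((x_h)_h) = (x_{g⁻¹ h})_h`. -/
def shiftMap [Group G] (g : G) : (G → ℝ) → G → ℝ := fun x h => x (g⁻¹ * h)

/-- The (possibly non-invertible) right-style translation `Q_g((x_h)_h) = (x_{g h})_h`. -/
def transMap [Mul G] (g : G) : (G → ℝ) → G → ℝ := fun x h => x (g * h)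

/-- (Left) stationarity of a `G`-process. -/
def Stationary [Mul G] [MeasurableSpace Ω] (P : Measure Ω) (X : G → Ω → ℝ) : Prop :=
  ∀ g : G, procLaw P (fun h => X (g * h)) = procLaw P X

/-- Ergodicity of a stationary `G`-process: every a.s. translation-invariant measurable set
in `ℝ^G` has law-measure `0` or `1`. -/
def ErgodicProcess [Group G] [MeasurableSpace Ω] (P : Measure Ω) (X : G → Ω → ℝ) : Prop :=
  ∀ E : Set (G → ℝ), MeasurableSet E →
    (∀ g : G, procLaw P X ((shiftMap g ⁻¹' E) ∆ E) = 0) →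
    procLaw P X E = 0 ∨ procLaw P X E = 1

/-- Weak mixing of a stationary `G`-process: the diagonal product system
`{R_g × R_g}` on `(ℝ^G × ℝ^G, ℙ_X ⊗ ℙ_X)` is ergodic. -/
def WeaklyMixingProcess [Group G] [MeasurableSpace Ω] (P : Measure Ω) (X : G → Ω → ℝ) : Prop :=
  ∀ E : Set ((G → ℝ) × (G → ℝ)), MeasurableSet E →
    (∀ g : G, ((procLaw P X).prod (procLaw P X))
        (((fun p => (shiftMap g p.1, shiftMap g p.2)) ⁻¹' E) ∆ E) = 0) →
    ((procLaw P X).prod (procLaw P X)) E = 0 ∨ ((procLaw P X).prod (procLaw P X)) E = 1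

/-- Separability in probability of a `G`-process. -/
def SeparableInProbability [MeasurableSpace Ω] (P : Measure Ω) (X : G → Ω → ℝ) : Prop :=
  ∃ S : Set G, S.Countable ∧
    ∀ g : G, ∃ s : ℕ → G, (∀ n, s n ∈ S) ∧
      TendstoInMeasure P (fun n => X (s n)) atTop (X g)

/-- The finite dimensional distribution of the process along `gs : Fin n → G`. -/
def fdd [MeasurableSpace Ω] (P : Measure Ω) (X : G → Ω → ℝ) {n : ℕ} (gs : Fin n → G) :
    Measure (Fin n → ℝ) :=
  Measure.map (fun ω i => X (gs i) ω) P

/-- A measure on `ℝⁿ` is infinitely divisible if for every `m` it is the `m`-fold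
convolution power of some probability measure. -/
def InfinitelyDivisible {n : ℕ} (μ : Measure (Fin n → ℝ)) : Prop :=
  ∀ m : ℕ, 0 < m → ∃ ν : Measure (Fin n → ℝ), IsProbabilityMeasure ν ∧
    μ = Measure.map (fun x : Fin m → Fin n → ℝ => ∑ i, x i) (Measure.pi fun _ => ν)

/-- A `G`-process is infinitely divisible if all its finite dimensional
distributions are infinitely divisible. -/
def InfinitelyDivisibleProcess [MeasurableSpace Ω] (P : Measure Ω) (X : G → Ω → ℝ) : Prop :=
  ∀ (n : ℕ) (gs : Fin n → G), InfinitelyDivisible (fdd P X gs)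

/-- Stochastic continuity of a process indexed by a topological group (or semigroup). -/
def StochasticallyContinuous [TopologicalSpace G] [MeasurableSpace Ω]
    (P : Measure Ω) (X : G → Ω → ℝ) : Prop :=
  ∀ g₀ : G, TendstoInMeasure P X (𝓝 g₀) (X g₀)

/-- All finite dimensional characteristic functions of the process are nowhere vanishing. -/
def CharFunNonVanishing [MeasurableSpace Ω] (P : Measure Ω) (X : G → Ω → ℝ) : Prop :=
  ∀ (n : ℕ) (gs : Fin n → G) (t : Fin n → ℝ),
    (∫ x, Complex.exp (Complex.I * ((∑ i, t i * x i : ℝ) : ℂ)) ∂(fdd P X gs)) ≠ 0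

/-- A measure on `ℝⁿ` is a (possibly degenerate) Gaussian measure iff each of its
one-dimensional linear-functional pushforwards is a real Gaussian. -/
def IsGaussianMeasure {n : ℕ} (μ : Measure (Fin n → ℝ)) : Prop :=
  ∀ t : Fin n → ℝ, ∃ (m : ℝ) (v : NNReal),
    Measure.map (fun x => ∑ i, t i * x i) μ = gaussianReal m v

/-- A Gaussian `G`-process: all finite dimensional distributions are
(possibly degenerate) Gaussian. -/
def GaussianProcess [MeasurableSpace Ω] (P : Measure Ω) (X : G → Ω → ℝ) : Prop :=
  ∀ (n : ℕ) (gs : Fin n → G), IsGaussianMeasure (fdd P X gs)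

/-- Ergodicity of a probability preserving `Θ`-system (maps need not be invertible). -/
def ErgodicSystem {Θ 𝕏 : Type*} [MeasurableSpace 𝕏] (ξ : Measure 𝕏) (T : Θ → 𝕏 → 𝕏) : Prop :=
  ∀ A : Set 𝕏, MeasurableSet A → (∀ θ : Θ, ξ ((T θ ⁻¹' A) ∆ A) = 0) →
    ξ A = 0 ∨ ξ A = 1

/-- A probability preserving automorphism: a bi-measurable measure-preserving bijection
between full-measure measurable subsets. -/
def IsPPAutomorphism [MeasurableSpace Ω] (P : Measure Ω) (T : Ω → Ω) : Prop :=
  Measurable T ∧ (∀ A : Set Ω, MeasurableSet A → P (T ⁻¹' A) = P A) ∧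
  ∃ (A B : Set Ω) (σ : Ω → Ω), MeasurableSet A ∧ MeasurableSet B ∧
    P A = 1 ∧ P B = 1 ∧ Measurable σ ∧ Set.MapsTo T A B ∧ Set.MapsTo σ B A ∧
    Set.InvOn σ T A B

open scoped ENNReal

section ConvergentEvents

variable {ι Ω E : Type*} [MeasurableSpace Ω] [MeasurableSpace E]

def convergentEventSets (P : Measure Ω) (l : Filter ι) (Y : ι → Ω → E) (Z : Ω → E) :
    Set (Set E) :=
  {B | MeasurableSet B ∧ Tendsto (fun i => P ((Y i ⁻¹' B) ∆ (Z ⁻¹' B))) l (𝓝 0)}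

variable {P : Measure Ω} {l : Filter ι} {Y : ι → Ω → E} {Z : Ω → E} {κ : Measure E}

lemma isSetAlgebra_convergentEventSets : IsSetAlgebra (convergentEventSets P l Y Z) where
  empty_mem := ⟨.empty, by simpa using tendsto_const_nhds⟩
  compl_mem _ hB :=
    ⟨hB.1.compl, by simpa only [Set.preimage_compl, compl_symmDiff_compl] using hB.2⟩
  union_mem A B hA hB := by
    refine ⟨hA.1.union hB.1, tendsto_of_tendsto_of_tendsto_of_le_of_le tendsto_const_nhds
      (by simpa using hA.2.add hB.2) (fun _ => zero_le) fun i => ?_⟩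
    rw [Set.preimage_union, Set.preimage_union]
    exact (measure_mono (Set.union_symmDiff_union_subset ..)).trans (measure_union_le _ _)

lemma mem_convergentEventSets_of_approx (hY : ∀ i, MeasurePreserving (Y i) P κ)
    (hZ : MeasurePreserving Z P κ) {B : Set E} (hB : MeasurableSet B)
    (happrox : ∀ ε : ℝ≥0∞, 0 < ε → ∃ B' ∈ convergentEventSets P l Y Z, κ (B ∆ B') < ε) :
    B ∈ convergentEventSets P l Y Z := by
  refine ⟨hB, ENNReal.tendsto_nhds_zero.2 fun ε hε => ?_⟩
  have hε3 : 0 < ε / 3 := ENNReal.div_pos hε.ne' (by norm_num)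
  obtain ⟨B', ⟨hB'm, hB'⟩, hBB'⟩ := happrox _ hε3
  have hpre : ∀ {T : Ω → E}, MeasurePreserving T P κ →
      P ((T ⁻¹' B) ∆ (T ⁻¹' B')) = κ (B ∆ B') := fun hT => by
    rw [← Set.preimage_symmDiff, hT.measure_preimage (hB.symmDiff hB'm).nullMeasurableSet]
  filter_upwards [hB'.eventually (gt_mem_nhds hε3)] with i hi
  calc P ((Y i ⁻¹' B) ∆ (Z ⁻¹' B))
      ≤ P ((Y i ⁻¹' B) ∆ (Y i ⁻¹' B')) + P ((Y i ⁻¹' B') ∆ (Z ⁻¹' B'))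
          + P ((Z ⁻¹' B') ∆ (Z ⁻¹' B)) :=
        (measure_symmDiff_le _ (Z ⁻¹' B') _).trans (by gcongr; exact measure_symmDiff_le _ _ _)
    _ ≤ ε / 3 + ε / 3 + ε / 3 := by
        rw [hpre (hY i), symmDiff_comm (Z ⁻¹' B'), hpre hZ]
        gcongr
    _ = ε := ENNReal.add_thirds ε

lemma mem_convergentEventSets_of_generateFrom [IsFiniteMeasure κ]
    (hY : ∀ i, MeasurePreserving (Y i) P κ) (hZ : MeasurePreserving Z P κ) {𝒢 : Set (Set E)}
    (hgen : ‹MeasurableSpace E› = MeasurableSpace.generateFrom 𝒢)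
    (h𝒢 : 𝒢 ⊆ convergentEventSets P l Y Z) {B : Set E} (hB : MeasurableSet B) :
    B ∈ convergentEventSets P l Y Z := by
  have hdense := Measure.MeasureDense.of_generateFrom_isSetAlgebra_finite κ
    isSetAlgebra_convergentEventSets <| le_antisymm
      (hgen.le.trans (MeasurableSpace.generateFrom_mono h𝒢))
      (MeasurableSpace.generateFrom_le fun _ hB => hB.1)
  refine mem_convergentEventSets_of_approx hY hZ hB fun ε hε => ?_
  obtain ⟨r, -, hr, hrε⟩ := ENNReal.lt_iff_exists_real_btwn.1 hε
  obtain ⟨B', hB', hBB'⟩ :=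
    hdense.approx B hB (measure_ne_top κ B) r (ENNReal.ofReal_pos.1 hr)
  exact ⟨B', hB', hBB'.trans hrε⟩

lemma mem_convergentEventSets_of_isClosed [PseudoMetricSpace E] [OpensMeasurableSpace E]
    [IsFiniteMeasure κ] (hY : ∀ i, MeasurePreserving (Y i) P κ) (hZ : MeasurePreserving Z P κ)
    (hYZ : TendstoInMeasure P Y l Z) {F : Set E} (hF : IsClosed F) :
    F ∈ convergentEventSets P l Y Z := by
  refine ⟨hF.measurableSet, ENNReal.tendsto_nhds_zero.2 fun ε hε => ?_⟩
  have hε3 : 0 < ε / 3 := ENNReal.div_pos hε.ne' (by norm_num)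
  obtain ⟨r, hr, hκr⟩ : ∃ r > 0, κ (Metric.thickening r F \ F) < ε / 3 := by
    have hlim := tendsto_measure_thickening_of_isClosed ⟨1, one_pos, measure_ne_top κ _⟩ hF
    obtain ⟨r, hκr, hr⟩ := ((hlim.eventually (gt_mem_nhds
      (ENNReal.lt_add_right (measure_ne_top κ F) hε3.ne'))).and self_mem_nhdsWithin).exists
    exact ⟨r, hr, measure_sdiff_lt_of_lt_add hF.measurableSet.nullMeasurableSet
      (Metric.self_subset_thickening hr F) (measure_ne_top κ F) hκr⟩
  -- if `Y i ω` and `Z ω` are `r`-close but only one of them lies in `F`, the other one lies in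
  -- the thin shell `thickening r F \ F`
  have hsub : ∀ i, (Y i ⁻¹' F) ∆ (Z ⁻¹' F) ⊆ {ω | ENNReal.ofReal r ≤ edist (Y i ω) (Z ω)} ∪
      (Y i ⁻¹' (Metric.thickening r F \ F) ∪ Z ⁻¹' (Metric.thickening r F \ F)) := by
    intro i ω hω
    rcases lt_or_ge (edist (Y i ω) (Z ω)) (ENNReal.ofReal r) with hlt | hge
    · right
      rcases Set.mem_symmDiff.1 hω with ⟨hYF, hZF⟩ | ⟨hZF, hYF⟩
      · exact Or.inr ⟨(Metric.mem_thickening_iff_exists_edist_lt F _).2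
          ⟨_, hYF, by rwa [edist_comm]⟩, hZF⟩
      · exact Or.inl ⟨(Metric.mem_thickening_iff_exists_edist_lt F _).2 ⟨_, hZF, hlt⟩, hYF⟩
    · exact Or.inl hge
  have hshell : MeasurableSet (Metric.thickening r F \ F) :=
    Metric.isOpen_thickening.measurableSet.diff hF.measurableSet
  filter_upwards [(hYZ _ (ENNReal.ofReal_pos.2 hr)).eventually (gt_mem_nhds hε3)] with i hi
  calc P ((Y i ⁻¹' F) ∆ (Z ⁻¹' F))
      ≤ P {ω | ENNReal.ofReal r ≤ edist (Y i ω) (Z ω)} +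
          (P (Y i ⁻¹' (Metric.thickening r F \ F)) + P (Z ⁻¹' (Metric.thickening r F \ F))) :=
        (measure_mono (hsub i)).trans
          ((measure_union_le _ _).trans (by gcongr; exact measure_union_le _ _))
    _ ≤ ε / 3 + (ε / 3 + ε / 3) := by
        rw [(hY i).measure_preimage hshell.nullMeasurableSet,
          hZ.measure_preimage hshell.nullMeasurableSet]
        gcongr
    _ = ε := by rw [← add_assoc, ENNReal.add_thirds]

lemma mem_convergentEventSets_of_tendstoInMeasure [PseudoMetricSpace E] [BorelSpace E]
    [IsFiniteMeasure κ] (hY : ∀ i, MeasurePreserving (Y i) P κ) (hZ : MeasurePreserving Z P κ)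
    (hYZ : TendstoInMeasure P Y l Z) {B : Set E} (hB : MeasurableSet B) :
    B ∈ convergentEventSets P l Y Z :=
  mem_convergentEventSets_of_generateFrom hY hZ
    (BorelSpace.measurable_eq.trans borel_eq_generateFrom_isClosed)
    (fun _ hF => mem_convergentEventSets_of_isClosed hY hZ hYZ hF) hB

end ConvergentEvents

lemma _root_.MeasureTheory.MeasurePreserving.measure_preimage_comp_symmDiff_le {α : Type*}
    [MeasurableSpace α] {μ : Measure α} {T₁ T₂ : α → α} (hT₁ : Measurable T₁)
    (hT₂ : MeasurePreserving T₂ μ μ)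
    {A : Set α} (hA : MeasurableSet A) :
    μ (((T₁ ∘ T₂) ⁻¹' A) ∆ A) ≤ μ ((T₁ ⁻¹' A) ∆ A) + μ ((T₂ ⁻¹' A) ∆ A) :=
  calc μ (((T₁ ∘ T₂) ⁻¹' A) ∆ A)
      ≤ μ ((T₂ ⁻¹' (T₁ ⁻¹' A)) ∆ (T₂ ⁻¹' A)) + μ ((T₂ ⁻¹' A) ∆ A) := measure_symmDiff_le _ _ _
    _ = μ ((T₁ ⁻¹' A) ∆ A) + μ ((T₂ ⁻¹' A) ∆ A) := by
      rw [← Set.preimage_symmDiff, hT₂.measure_preimage ((hT₁ hA).symmDiff hA).nullMeasurableSet]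

lemma _root_.MeasureTheory.MeasurePreserving.measure_preimage_symmDiff_congr {α : Type*}
    [MeasurableSpace α] {μ : Measure α} {T : α → α} (hT : MeasurePreserving T μ μ) {A B : Set α}
    (h : A =ᵐ[μ] B) :
    μ ((T ⁻¹' A) ∆ A) = μ ((T ⁻¹' B) ∆ B) :=
  measure_congr ((hT.quasiMeasurePreserving.preimage_ae_eq h).symmDiff h)

lemma _root_.MeasureTheory.TendstoInMeasure.exists_seq_mem {ι α E : Type*} [MeasurableSpace α]
    [EDist E] {μ : Measure α} {l : Filter ι} [l.NeBot] {f : ι → α → E} {g : α → E}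
    (hfg : TendstoInMeasure μ f l g) {s : Set ι} (hs : s ∈ l) :
    ∃ u : ℕ → ι, (∀ n, u n ∈ s) ∧ TendstoInMeasure μ (fun n => f (u n)) atTop g := by
  have hev : ∀ n : ℕ, ∀ᶠ i in l, i ∈ s ∧
      μ {x | ((n : ℝ≥0∞) + 1)⁻¹ ≤ edist (f i x) (g x)} ≤ ((n : ℝ≥0∞) + 1)⁻¹ := fun n =>
    inter_mem hs ((hfg _ (by simp)).eventually (ge_mem_nhds (by simp)))
  choose u hu using fun n => (hev n).exists
  refine ⟨u, fun n => (hu n).1, fun ε hε => ENNReal.tendsto_nhds_zero.2 fun δ hδ => ?_⟩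
  obtain ⟨N, hN⟩ := ENNReal.exists_inv_nat_lt (lt_min hε hδ).ne'
  filter_upwards [eventually_ge_atTop N] with n hn
  have hn' : ((n : ℝ≥0∞) + 1)⁻¹ ≤ min ε δ :=
    le_trans (ENNReal.inv_le_inv.2 (by exact_mod_cast hn.trans n.le_succ)) hN.le
  calc μ {x | ε ≤ edist (f (u n) x) (g x)}
      ≤ μ {x | ((n : ℝ≥0∞) + 1)⁻¹ ≤ edist (f (u n) x) (g x)} :=
        measure_mono fun x hx => (hn'.trans (min_le_left _ _)).trans hx
    _ ≤ δ := (hu n).2.trans (hn'.trans (min_le_right _ _))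

lemma exists_measurable_ae_eq_comp_of_tendsto_ae {α β E : Type*} [MeasurableSpace α]
    [MeasurableSpace β] [TopologicalSpace E] [PolishSpace E] [MeasurableSpace E] [BorelSpace E]
    {μ : Measure α} {W : α → β} (hW : Measurable W) {φ : ℕ → β → E}
    (hφ : ∀ n, Measurable (φ n)) {Z : α → E}
    (hZ : ∀ᵐ x ∂μ, Tendsto (fun n => φ n (W x)) atTop (𝓝 (Z x))) :
    ∃ h : β → E, Measurable h ∧ Z =ᵐ[μ] h ∘ W := by
  obtain ⟨h, hm, hh⟩ := measurable_limit_of_tendsto_metrizable_ae (μ := μ.map W)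
    (fun n => (hφ n).aemeasurable) ((ae_map_iff hW.aemeasurable
      (measurableSet_exists_tendsto hφ)).2 (hZ.mono fun x hx => ⟨_, hx⟩))
  refine ⟨h, hm, ?_⟩
  filter_upwards [hZ, ae_of_ae_map hW.aemeasurable hh] with x h1 h2
  exact tendsto_nhds_unique h1 h2

lemma exists_measurableSet_ae_eq_preimage {α β : Type*} [mα : MeasurableSpace α]
    [MeasurableSpace β] {μ : Measure α} {r : α → β} {𝒢 : Set (Set α)}
    (hgen : mα = MeasurableSpace.generateFrom 𝒢)
    (h𝒢 : ∀ A ∈ 𝒢, ∃ F, MeasurableSet F ∧ A =ᵐ[μ] r ⁻¹' F) {A : Set α} (hA : MeasurableSet A) :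
    ∃ F, MeasurableSet F ∧ A =ᵐ[μ] r ⁻¹' F := by
  rw [hgen] at hA
  induction A, hA using MeasurableSpace.generateFrom_induction with
  | hC A hA _ => exact h𝒢 A hA
  | empty => exact ⟨∅, .empty, by simp⟩
  | compl A _ ih =>
    obtain ⟨F, hF, hAF⟩ := ih
    exact ⟨Fᶜ, hF.compl, hAF.compl⟩
  | iUnion A _ ih =>
    choose F hF hAF using ih
    refine ⟨⋃ n, F n, .iUnion hF, ?_⟩
    rw [Set.preimage_iUnion]
    exact Filter.EventuallyEq.countable_iUnion hAF

lemma _root_.Dense.eq_zero_of_subadditive {Γ : Type*} [Group Γ] [TopologicalSpace Γ]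
    [IsTopologicalGroup Γ] {d : Γ → ℝ≥0∞} (hmul : ∀ a b, d (a * b) ≤ d a + d b)
    (hd : Tendsto d (𝓝 1) (𝓝 0)) {s : Set Γ} (hs : Dense s) (hs0 : ∀ g ∈ s, d g = 0) (γ : Γ) :
    d γ = 0 := by
  have := mem_closure_iff_nhdsWithin_neBot.1 (hs γ)
  have hlim : Tendsto (fun g => d (γ * g⁻¹)) (𝓝[s] γ) (𝓝 0) :=
    hd.comp (tendsto_nhdsWithin_of_tendsto_nhds
      ((continuous_const.mul continuous_inv).tendsto' γ 1 (mul_inv_cancel γ)))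
  refine le_antisymm (ge_of_tendsto hlim ?_) zero_le
  filter_upwards [self_mem_nhdsWithin] with g hg
  simpa [hs0 g hg] using hmul (γ * g⁻¹) g

section Shift

variable {Γ : Type*} [Group Γ]

lemma measurable_shiftMap (g : Γ) : Measurable (shiftMap g : (Γ → ℝ) → Γ → ℝ) :=
  measurable_pi_lambda _ fun _ => measurable_pi_apply _

lemma shiftMap_mul (a b : Γ) : (shiftMap (a * b) : (Γ → ℝ) → Γ → ℝ) = shiftMap a ∘ shiftMap b := by
  funext x h
  simp [shiftMap, mul_assoc]

variable {Ω : Type*} [MeasurableSpace Ω] {P : Measure Ω} {X : Γ → Ω → ℝ}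

instance isFiniteMeasure_procLaw [IsFiniteMeasure P] : IsFiniteMeasure (procLaw P X) := by
  unfold procLaw; infer_instance

lemma Stationary.measurePreserving_shiftMap (hmeas : ∀ γ, Measurable (X γ))
    (hstat : Stationary P X) (g : Γ) :
    MeasurePreserving (shiftMap g) (procLaw P X) (procLaw P X) := by
  refine ⟨measurable_shiftMap g, ?_⟩
  rw [procLaw, Measure.map_map (measurable_shiftMap g) (measurable_pi_lambda _ hmeas)]
  exact hstat g⁻¹

lemma Stationary.map_mul (hmeas : ∀ γ, Measurable (X γ)) (hstat : Stationary P X) (g γ : Γ) :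
    P.map (X (g * γ)) = P.map (X γ) := by
  have := congrArg (Measure.map (Function.eval γ)) (hstat g)
  rwa [procLaw, procLaw,
    Measure.map_map (measurable_pi_apply γ) (measurable_pi_lambda _ fun _ => hmeas _),
    Measure.map_map (measurable_pi_apply γ) (measurable_pi_lambda _ hmeas)] at this

lemma Stationary.tendsto_measure_shiftMap_preimage_symmDiff [TopologicalSpace Γ]
    [IsTopologicalGroup Γ] [IsFiniteMeasure P] (hmeas : ∀ γ, Measurable (X γ))
    (hstat : Stationary P X) (hcont : StochasticallyContinuous P X) {S : Set (Γ → ℝ)}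
    (hS : MeasurableSet S) :
    Tendsto (fun δ => procLaw P X ((shiftMap δ ⁻¹' S) ∆ S)) (𝓝 1) (𝓝 0) := by
  have hpath : MeasurePreserving (fun ω γ => X γ ω) P (procLaw P X) :=
    ⟨measurable_pi_lambda _ hmeas, rfl⟩
  have hS' := mem_convergentEventSets_of_generateFrom (l := 𝓝 1)
    (fun δ => (hstat.measurePreserving_shiftMap hmeas δ).comp hpath) hpath
    MeasurableSpace.pi_eq_generateFrom_projections ?_ hS
  · refine hS'.2.congr fun δ => ?_
    rw [← hpath.measure_preimage ((measurable_shiftMap δ hS).symmDiff hS).nullMeasurableSet]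
    rfl
  -- the shifted and the unshifted path pull `{x | x γ ∈ B}` back to `{X (δ⁻¹ * γ) ∈ B}` and
  -- `{X γ ∈ B}`, and these two variables have the same law
  rintro _ ⟨γ, B, hB, rfl⟩
  have hshift : TendstoInMeasure P (fun δ => X (δ⁻¹ * γ)) (𝓝 1) (X γ) := fun ε hε =>
    (hcont γ ε hε).comp ((continuous_inv.mul continuous_const).tendsto' 1 γ (by simp))
  exact ⟨measurable_pi_apply γ hB, (mem_convergentEventSets_of_tendstoInMeasure
    (fun δ => ⟨hmeas _, hstat.map_mul hmeas δ⁻¹ γ⟩) ⟨hmeas γ, rfl⟩ hshift hB).2⟩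

lemma Stationary.measure_shiftMap_preimage_symmDiff_eq_zero_of_dense [TopologicalSpace Γ]
    [IsTopologicalGroup Γ] [IsFiniteMeasure P] (hmeas : ∀ γ, Measurable (X γ))
    (hstat : Stationary P X) (hcont : StochasticallyContinuous P X) {s : Set Γ} (hs : Dense s)
    {E : Set (Γ → ℝ)} (hE : MeasurableSet E)
    (hsE : ∀ g ∈ s, procLaw P X ((shiftMap g ⁻¹' E) ∆ E) = 0) (γ : Γ) :
    procLaw P X ((shiftMap γ ⁻¹' E) ∆ E) = 0 :=
  hs.eq_zero_of_subadditive (fun a b => by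
      rw [shiftMap_mul]
      exact (hstat.measurePreserving_shiftMap hmeas b).measure_preimage_comp_symmDiff_le
        (measurable_shiftMap a) hE)
    (hstat.tendsto_measure_shiftMap_preimage_symmDiff hmeas hcont hE) hsE γ

end Shift

section Restriction

variable {Γ : Type*} [Group Γ] (G : Subgroup Γ)

def restrictSubgroup (x : Γ → ℝ) : G → ℝ := fun g => x g

lemma measurable_restrictSubgroup : Measurable (restrictSubgroup G) :=
  measurable_pi_lambda _ fun _ => measurable_pi_apply _

variable {Ω : Type*} [MeasurableSpace Ω] {P : Measure Ω} {X : Γ → Ω → ℝ}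

lemma procLaw_subgroup (hmeas : ∀ γ, Measurable (X γ)) :
    procLaw P (fun g : G => X g) = (procLaw P X).map (restrictSubgroup G) := by
  rw [procLaw, procLaw, Measure.map_map (measurable_restrictSubgroup G)
    (measurable_pi_lambda _ hmeas)]
  rfl

lemma procLaw_subgroup_apply (hmeas : ∀ γ, Measurable (X γ)) {F : Set (G → ℝ)}
    (hF : MeasurableSet F) :
    procLaw P (fun g : G => X g) F = procLaw P X (restrictSubgroup G ⁻¹' F) := by
  rw [procLaw_subgroup G hmeas, Measure.map_apply (measurable_restrictSubgroup G) hF]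

lemma procLaw_subgroup_shiftMap_preimage_symmDiff (hmeas : ∀ γ, Measurable (X γ))
    {F : Set (G → ℝ)} (hF : MeasurableSet F) (g : G) :
    procLaw P (fun g : G => X g) ((shiftMap g ⁻¹' F) ∆ F) =
      procLaw P X ((shiftMap (g : Γ) ⁻¹' (restrictSubgroup G ⁻¹' F)) ∆
        (restrictSubgroup G ⁻¹' F)) := by
  rw [procLaw_subgroup_apply G hmeas ((measurable_shiftMap g hF).symmDiff hF)]
  congr 1

lemma exists_measurable_ae_eq_restrictSubgroup [TopologicalSpace Γ] (hG : Dense (G : Set Γ))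
    (hmeas : ∀ γ, Measurable (X γ)) (hcont : StochasticallyContinuous P X) (γ : Γ) :
    ∃ h : (G → ℝ) → ℝ, Measurable h ∧
      ∀ᵐ x ∂procLaw P X, x γ = h (restrictSubgroup G x) := by
  have := mem_closure_iff_nhdsWithin_neBot.1 (hG γ)
  obtain ⟨u, huG, hu⟩ := TendstoInMeasure.exists_seq_mem (s := (G : Set Γ))
    (fun ε hε => (hcont γ ε hε).mono_left nhdsWithin_le_nhds) self_mem_nhdsWithin
  obtain ⟨ns, -, hae⟩ := hu.exists_seq_tendsto_ae
  have hpath : Measurable fun ω γ => X γ ω := measurable_pi_lambda _ hmeas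
  obtain ⟨h, hm, hh⟩ := exists_measurable_ae_eq_comp_of_tendsto_ae (E := ℝ)
    ((measurable_restrictSubgroup G).comp hpath)
    (fun n => measurable_pi_apply (⟨u (ns n), huG (ns n)⟩ : G)) hae
  refine ⟨h, hm, (ae_map_iff hpath.aemeasurable ?_).2 hh⟩
  exact measurableSet_eq_fun (measurable_pi_apply γ) (hm.comp (measurable_restrictSubgroup G))

lemma exists_measurableSet_ae_eq_restrictSubgroup_preimage [TopologicalSpace Γ]
    (hG : Dense (G : Set Γ)) (hmeas : ∀ γ, Measurable (X γ))
    (hcont : StochasticallyContinuous P X) {E : Set (Γ → ℝ)} (hE : MeasurableSet E) :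
    ∃ F, MeasurableSet F ∧ E =ᵐ[procLaw P X] restrictSubgroup G ⁻¹' F := by
  refine exists_measurableSet_ae_eq_preimage MeasurableSpace.pi_eq_generateFrom_projections ?_ hE
  rintro _ ⟨γ, B, hB, rfl⟩
  obtain ⟨h, hm, hh⟩ := exists_measurable_ae_eq_restrictSubgroup G hG hmeas hcont γ
  exact ⟨h ⁻¹' B, hm hB, EventuallyEq.preimage hh B⟩

end Restriction

theorem ergodic_iff_denseSubgroup_ergodic_general
    {Γ : Type*} [Group Γ] [TopologicalSpace Γ] [IsTopologicalGroup Γ]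
    (G : Subgroup Γ) (hG : Dense (G : Set Γ))
    {Ω : Type*} [MeasurableSpace Ω] (P : Measure Ω) [IsProbabilityMeasure P]
    (X : Γ → Ω → ℝ) (hmeas : ∀ γ, Measurable (X γ)) (hstat : Stationary P X)
    (hcont : StochasticallyContinuous P X) :
    ErgodicProcess P X ↔ ErgodicProcess P (fun g : G => X ↑g) := by
  constructor
  · intro hErg F hF hinvG
    have hE := measurable_restrictSubgroup G hF
    have hinv := hstat.measure_shiftMap_preimage_symmDiff_eq_zero_of_dense hmeas hcont hG hE
      fun g hg => (procLaw_subgroup_shiftMap_preimage_symmDiff G hmeas hF ⟨g, hg⟩).symm.trans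
        (hinvG ⟨g, hg⟩)
    rw [procLaw_subgroup_apply G hmeas hF]
    exact hErg _ hE hinv
  · intro hErg E hE hinv
    obtain ⟨F, hF, hEF⟩ :=
      exists_measurableSet_ae_eq_restrictSubgroup_preimage G hG hmeas hcont hE
    have hinvG : ∀ g : G, procLaw P (fun g : G => X g) ((shiftMap g ⁻¹' F) ∆ F) = 0 := by
      intro g
      rw [procLaw_subgroup_shiftMap_preimage_symmDiff G hmeas hF,
        ← (hstat.measurePreserving_shiftMap hmeas g).measure_preimage_symmDiff_congr hEF, hinv]
    rw [measure_congr hEF, ← procLaw_subgroup_apply G hmeas hF]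
    exact hErg F hF hinvG

/-- a stochastically continuous stationary process over a Polish group `Γ`
is `Γ`-ergodic iff its restriction to a dense subgroup `G` is `G`-ergodic. -/
theorem ergodic_iff_denseSubgroup_ergodic
    {Γ : Type*} [Group Γ] [TopologicalSpace Γ] [IsTopologicalGroup Γ] [PolishSpace Γ]
    (G : Subgroup Γ) (hG : Dense (G : Set Γ))
    {Ω : Type*} [MeasurableSpace Ω] (P : Measure Ω) [IsProbabilityMeasure P]
    (X : Γ → Ω → ℝ) (hmeas : ∀ γ, Measurable (X γ)) (hstat : Stationary P X)
    (hcont : StochasticallyContinuous P X) :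
    ErgodicProcess P X ↔ ErgodicProcess P (fun g : G => X ↑g) :=
  ergodic_iff_denseSubgroup_ergodic_general G hG P X hmeas hstat hcont

end Paper
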